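/- Let D ⊂ ℝ^d be a compact set with finite positive Lebesgue measure |D|, J = [0,T] with T > 0, (Ω, ℱ, ℙ) a probability space, and 1 ≤ p < ∞. Let w : Ω → L²(D×D), f : Ω → BC¹(ℝ), g : Ω → C⁰(J, L²(D)), and v : Ω → L²(D) be strongly ℙ-measurable with ∫_Ω ‖w(ω)‖^p dℙ < ∞, ∫_Ω (sup_{s∈ℝ}|f(ω)(s)|)^p dℙ < ∞, ∫_Ω ‖g(ω)‖_{C⁰}^p dℙ < ∞, ∫_Ω ‖v(ω)‖₂^p dℙ < ∞, and assume w, f, g, v are mutually independent. Let u : Ω → C¹(J, L²(D)) be strongly ℙ-measurable such that ℙ-a.s. u(ω)(0) = v(ω) and u(ω)'(t) = −u(ω)(t) + H(w(ω))(f(ω)∘u(ω)(t)) + g(ω)(t) for all t ∈ J. Then ∫_Ω ‖u(ω)‖_{C¹(J,L²(D))}^p dℙ(ω) < ∞. -/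

import Mathlib

/-!
Pathwise, the forcing term `H(w)(f ∘ u) + g` of `u' = -u + H(w)(f ∘ u) + g` is bounded
independently of `u`, by `c ‖w‖ ‖f‖_∞ + ‖g‖_{C⁰}`: the kernel operator obeys the
Hilbert–Schmidt bound `‖H(k) z‖₂ ≤ ‖k‖₂ ‖z‖₂`, and `‖f ∘ z‖₂ ≤ |D|^{1/2} ‖f‖_∞`.
Grönwall's inequality then gives `‖u‖_{C¹} ≤ M (‖v‖₂ + ‖w‖₂ ‖f‖_∞ + ‖g‖_{C⁰})` with a
deterministic `M`. The `p`-th moment of the right-hand side is finite by Minkowski's inequality,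
the product term because independence gives `𝔼 (‖w‖ ‖f‖)^p = 𝔼 ‖w‖^p 𝔼 ‖f‖^p`.
-/

open MeasureTheory Set
open scoped ENNReal NNReal

/-- `BC¹(ℝ)` encoded as pairs (function, derivative) of bounded continuous functions. -/
def BC1 : Type :=
  {p : BoundedContinuousFunction ℝ ℝ × BoundedContinuousFunction ℝ ℝ //
    ∀ s : ℝ, HasDerivAt (p.1 : ℝ → ℝ) (p.2 s) s}

noncomputable instance : TopologicalSpace BC1 := by unfold BC1; infer_instance

section HilbertSchmidt

variable {α : Type*} [MeasurableSpace α] {μ : Measure α}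

theorem eLpNorm_two_rpow_two {f : α → ℝ} :
    eLpNorm f 2 μ ^ (2 : ℝ) = ∫⁻ x, ‖f x‖ₑ ^ (2 : ℝ) ∂μ := by
  simpa using eLpNorm_nnreal_pow_eq_lintegral (μ := μ) (f := f) (p := 2) two_ne_zero

theorem enorm_integral_mul_le_eLpNorm_mul_eLpNorm {g h : α → ℝ}
    (hg : AEStronglyMeasurable g μ) (hh : AEStronglyMeasurable h μ) :
    ‖∫ a, g a * h a ∂μ‖ₑ ≤ eLpNorm g 2 μ * eLpNorm h 2 μ :=
  calc ‖∫ a, g a * h a ∂μ‖ₑ ≤ eLpNorm (g • h) 1 μ := by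
        rw [eLpNorm_one_eq_lintegral_enorm]; exact enorm_integral_le_lintegral_enorm _
    _ ≤ eLpNorm g 2 μ * eLpNorm h 2 μ := eLpNorm_smul_le_mul_eLpNorm hh hg

theorem eLpNorm_integral_kernel_le [SFinite μ] {k : α × α → ℝ} {z : α → ℝ}
    (hk : AEStronglyMeasurable k (μ.prod μ)) (hz : AEStronglyMeasurable z μ) :
    eLpNorm (fun x => ∫ y, k (x, y) * z y ∂μ) 2 μ ≤ eLpNorm k 2 (μ.prod μ) * eLpNorm z 2 μ := by
  have hk2 : AEMeasurable (fun q => ‖k q‖ₑ ^ (2 : ℝ)) (μ.prod μ) := hk.enorm.pow_const _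
  rw [← ENNReal.rpow_le_rpow_iff two_pos, ENNReal.mul_rpow_of_nonneg _ _ zero_le_two,
    eLpNorm_two_rpow_two, eLpNorm_two_rpow_two, lintegral_prod _ hk2,
    ← lintegral_mul_const'' _ hk2.lintegral_prod_right']
  refine lintegral_mono_ae ?_
  filter_upwards [hk.prodMk_left] with x hkx
  rw [← eLpNorm_two_rpow_two, ← ENNReal.mul_rpow_of_nonneg _ _ zero_le_two]
  exact ENNReal.rpow_le_rpow (enorm_integral_mul_le_eLpNorm_mul_eLpNorm hkx hz) zero_le_two

theorem norm_le_mul_norm_of_ae_eq_integral_kernel [SFinite μ] (k : Lp ℝ 2 (μ.prod μ))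
    (z F : Lp ℝ 2 μ) (hF : F =ᵐ[μ] fun x => ∫ y, k (x, y) * z y ∂μ) :
    ‖F‖ ≤ ‖k‖ * ‖z‖ := by
  simp only [Lp.norm_def, ← ENNReal.toReal_mul]
  refine ENNReal.toReal_mono (ENNReal.mul_ne_top (Lp.eLpNorm_ne_top k) (Lp.eLpNorm_ne_top z)) ?_
  rw [eLpNorm_congr_ae hF]
  exact eLpNorm_integral_kernel_le (Lp.aestronglyMeasurable k) (Lp.aestronglyMeasurable z)

theorem norm_le_of_ae_eq_integral_kernel_comp [IsFiniteMeasure μ] {k : Lp ℝ 2 (μ.prod μ)}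
    {φ : BoundedContinuousFunction ℝ ℝ} {z N F : Lp ℝ 2 μ} (hN : N =ᵐ[μ] fun x => φ (z x))
    (hF : F =ᵐ[μ] fun x => ∫ y, k (x, y) * N y ∂μ) :
    ‖F‖ ≤ measureUnivNNReal μ ^ (2 : ℝ≥0∞).toReal⁻¹ * (‖k‖ * ‖φ‖) := by
  have hNφ : ‖N‖ ≤ measureUnivNNReal μ ^ (2 : ℝ≥0∞).toReal⁻¹ * ‖φ‖ :=
    Lp.norm_le_of_ae_bound (norm_nonneg _)
      (hN.mono fun x hx => hx ▸ φ.norm_coe_le_norm _)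
  calc ‖F‖ ≤ ‖k‖ * ‖N‖ := norm_le_mul_norm_of_ae_eq_integral_kernel k N F hF
    _ ≤ ‖k‖ * (measureUnivNNReal μ ^ (2 : ℝ≥0∞).toReal⁻¹ * ‖φ‖) := by gcongr
    _ = _ := by ring

end HilbertSchmidt

section Gronwall

variable {E : Type*} [NormedAddCommGroup E] [NormedSpace ℝ E] {T K : ℝ} (hT : 0 ≤ T)
  {u du : C(Icc 0 T, E)}

theorem ContinuousMap.norm_le_of_norm_deriv_le_norm_add (hK : 0 ≤ K)
    (hderiv : ∀ t ∈ Icc 0 T,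
      HasDerivWithinAt (fun s => u (projIcc 0 T hT s)) (du (projIcc 0 T hT t)) (Icc 0 T) t)
    (hbound : ∀ t ∈ Icc 0 T, ‖du (projIcc 0 T hT t)‖ ≤ ‖u (projIcc 0 T hT t)‖ + K) :
    ‖u‖ ≤ (‖u (projIcc 0 T hT 0)‖ + K) * Real.exp T := by
  have hgron := norm_le_gronwallBound_of_norm_deriv_right_le (K := 1) (a := 0) (b := T)
    (u.continuous.comp continuous_projIcc).continuousOn
    (fun t ht => (hderiv t (Ico_subset_Icc_self ht)).mono_of_mem_nhdsWithin
      (Icc_mem_nhdsGE_of_mem ht))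
    le_rfl (fun t ht => by simpa using hbound t (Ico_subset_Icc_self ht))
  refine (ContinuousMap.norm_le _ (by positivity)).mpr fun t => ?_
  have hexp : Real.exp t ≤ Real.exp T := Real.exp_le_exp.mpr t.2.2
  have := hgron t t.2
  simp only [Function.comp_apply, projIcc_val, gronwallBound_of_K_ne_0 one_ne_zero, one_mul,
    div_one, sub_zero] at this
  nlinarith [norm_nonneg (u (projIcc 0 T hT 0)), Real.exp_pos (t : ℝ)]

theorem ContinuousMap.norm_add_norm_deriv_le_of_eq_neg_add (F : ℝ → E)
    (hF : ∀ t ∈ Icc 0 T, ‖F t‖ ≤ K)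
    (hderiv : ∀ t ∈ Icc 0 T,
      HasDerivWithinAt (fun s => u (projIcc 0 T hT s)) (du (projIcc 0 T hT t)) (Icc 0 T) t)
    (heq : ∀ t ∈ Icc 0 T, du (projIcc 0 T hT t) = -u (projIcc 0 T hT t) + F t) :
    ‖u‖ + ‖du‖ ≤ (2 * Real.exp T + 1) * (‖u (projIcc 0 T hT 0)‖ + K) := by
  have hK : 0 ≤ K := (norm_nonneg _).trans (hF 0 (left_mem_Icc.mpr hT))
  have hbound : ∀ t ∈ Icc 0 T, ‖du (projIcc 0 T hT t)‖ ≤ ‖u (projIcc 0 T hT t)‖ + K :=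
    fun t ht => by
      rw [heq t ht]
      exact (norm_add_le _ _).trans (by rw [norm_neg]; gcongr; exact hF t ht)
  have hu := ContinuousMap.norm_le_of_norm_deriv_le_norm_add hT hK hderiv hbound
  have hdu : ‖du‖ ≤ ‖u‖ + K := by
    refine (ContinuousMap.norm_le _ (by positivity)).mpr fun t => ?_
    simpa using (hbound t t.2).trans (by gcongr; exact u.norm_coe_le_norm _)
  nlinarith [norm_nonneg (u (projIcc 0 T hT 0)), Real.one_le_exp hT]

end Gronwall

section Moments

open ProbabilityTheory

variable {Ω : Type*} [MeasurableSpace Ω] {μ : Measure Ω}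

theorem indepFun_of_measure_inter_preimage_eq_mul₄ [IsProbabilityMeasure μ]
    {α β γ δ : Type*} {_ : MeasurableSpace α} {_ : MeasurableSpace β} {_ : MeasurableSpace γ}
    {_ : MeasurableSpace δ} {X : Ω → α} {Y : Ω → β} {Z : Ω → γ} {W : Ω → δ}
    (h : ∀ (A : Set α) (B : Set β) (C : Set γ) (E : Set δ), MeasurableSet A →
      MeasurableSet B → MeasurableSet C → MeasurableSet E →
      μ (X ⁻¹' A ∩ Y ⁻¹' B ∩ Z ⁻¹' C ∩ W ⁻¹' E) =
        μ (X ⁻¹' A) * μ (Y ⁻¹' B) * μ (Z ⁻¹' C) * μ (W ⁻¹' E)) :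
    IndepFun X Y μ := by
  rw [indepFun_iff_measure_inter_preimage_eq_mul]
  intro A B hA hB
  simpa using h A B univ univ hA hB .univ .univ

theorem lintegral_mul_rpow_lt_top_of_indepFun {p : ℝ} (hp : 0 ≤ p) {X Y : Ω → ℝ≥0∞}
    (hX : AEMeasurable X μ) (hY : AEMeasurable Y μ) (hXY : IndepFun X Y μ)
    (hXp : ∫⁻ ω, X ω ^ p ∂μ < ⊤) (hYp : ∫⁻ ω, Y ω ^ p ∂μ < ⊤) :
    ∫⁻ ω, (X ω * Y ω) ^ p ∂μ < ⊤ := by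
  simp_rw [ENNReal.mul_rpow_of_nonneg _ _ hp]
  rw [lintegral_mul_eq_lintegral_mul_lintegral_of_indepFun'' (hX.pow_const p) (hY.pow_const p)
    (hXY.comp (measurable_id.pow_const p) (measurable_id.pow_const p))]
  exact ENNReal.mul_lt_top hXp hYp

theorem lintegral_rpow_lt_top_of_le_mul_add_mul_add {p : ℝ} (hp : 1 ≤ p)
    {U A B E G : Ω → ℝ≥0∞} (C : ℝ≥0) (hU : ∀ᵐ ω ∂μ, U ω ≤ C * (A ω + B ω * E ω + G ω))
    (hA : AEMeasurable A μ) (hB : AEMeasurable B μ) (hE : AEMeasurable E μ)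
    (hBE : IndepFun B E μ) (hAp : ∫⁻ ω, A ω ^ p ∂μ < ⊤) (hBp : ∫⁻ ω, B ω ^ p ∂μ < ⊤)
    (hEp : ∫⁻ ω, E ω ^ p ∂μ < ⊤) (hGp : ∫⁻ ω, G ω ^ p ∂μ < ⊤) :
    ∫⁻ ω, U ω ^ p ∂μ < ⊤ := by
  have hp0 : 0 ≤ p := zero_le_one.trans hp
  have hsum : ∫⁻ ω, (A ω + B ω * E ω + G ω) ^ p ∂μ < ⊤ :=
    ENNReal.lintegral_rpow_add_lt_top_of_lintegral_rpow_lt_top (hA.add (hB.mul hE))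
      (ENNReal.lintegral_rpow_add_lt_top_of_lintegral_rpow_lt_top hA hAp
        (lintegral_mul_rpow_lt_top_of_indepFun hp0 hB hE hBE hBp hEp) hp) hGp hp
  calc ∫⁻ ω, U ω ^ p ∂μ ≤ ∫⁻ ω, (C : ℝ≥0∞) ^ p * (A ω + B ω * E ω + G ω) ^ p ∂μ :=
        lintegral_mono_ae <| hU.mono fun ω h =>
          (ENNReal.rpow_le_rpow h hp0).trans_eq (ENNReal.mul_rpow_of_nonneg _ _ hp0)
    _ < ⊤ := by
      rw [lintegral_const_mul' _ _ (by finiteness)]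
      exact ENNReal.mul_lt_top (by finiteness) hsum

end Moments

theorem stmt15_general (d : ℕ) (D : Set (EuclideanSpace ℝ (Fin d)))
    (hfin : volume D < ⊤)
    (T : ℝ) (hT : 0 < T)
    (Ω : Type*) [MeasurableSpace Ω] (ℙ : Measure Ω) [IsProbabilityMeasure ℙ]
    (p : ℝ) (hp : 1 ≤ p)
    (HH : Lp ℝ 2 ((volume.restrict D).prod (volume.restrict D)) →
      (Lp ℝ 2 (volume.restrict D) →L[ℝ] Lp ℝ 2 (volume.restrict D)))
    (hHH : ∀ kk (z : Lp ℝ 2 (volume.restrict D)),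
      (HH kk z : _ → ℝ) =ᵐ[volume.restrict D]
        fun x => ∫ x', kk (x, x') * z x' ∂(volume.restrict D))
    (Nem : BC1 → Lp ℝ 2 (volume.restrict D) → Lp ℝ 2 (volume.restrict D))
    (hNem : ∀ (φ : BC1) (z : Lp ℝ 2 (volume.restrict D)),
      (Nem φ z : _ → ℝ) =ᵐ[volume.restrict D] fun x => (φ.val.1 : ℝ → ℝ) (z x))
    -- strongly measurable, p-integrable random data
    (w : Ω → Lp ℝ 2 ((volume.restrict D).prod (volume.restrict D)))
    (hw : AEStronglyMeasurable w ℙ)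
    (hwp : ∫⁻ ω, (‖w ω‖₊ : ℝ≥0∞) ^ p ∂ℙ < ⊤)
    (f : Ω → BC1) (hf : AEStronglyMeasurable f ℙ)
    (hfp : ∫⁻ ω, (‖(f ω).val.1‖₊ : ℝ≥0∞) ^ p ∂ℙ < ⊤)
    (g : Ω → C(Set.Icc (0:ℝ) T, Lp ℝ 2 (volume.restrict D)))
    (hgp : ∫⁻ ω, (‖g ω‖₊ : ℝ≥0∞) ^ p ∂ℙ < ⊤)
    (v : Ω → Lp ℝ 2 (volume.restrict D)) (hv : AEStronglyMeasurable v ℙ)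
    (hvp : ∫⁻ ω, (‖v ω‖₊ : ℝ≥0∞) ^ p ∂ℙ < ⊤)
    -- mutual independence of (w, f, g, v)
    (hindep : ∀ (Bw : Set (Lp ℝ 2 ((volume.restrict D).prod (volume.restrict D))))
      (Bf : Set BC1)
      (Bg : Set (C(Set.Icc (0:ℝ) T, Lp ℝ 2 (volume.restrict D))))
      (Bv : Set (Lp ℝ 2 (volume.restrict D))),
      MeasurableSet[borel _] Bw → MeasurableSet[borel _] Bf →
      MeasurableSet[borel _] Bg → MeasurableSet[borel _] Bv →
      ℙ (w ⁻¹' Bw ∩ f ⁻¹' Bf ∩ g ⁻¹' Bg ∩ v ⁻¹' Bv) =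
        ℙ (w ⁻¹' Bw) * ℙ (f ⁻¹' Bf) * ℙ (g ⁻¹' Bg) * ℙ (v ⁻¹' Bv))
    -- a strongly measurable C¹-valued solution (value u, derivative du)
    (u du : Ω → C(Set.Icc (0:ℝ) T, Lp ℝ 2 (volume.restrict D)))
    (husol : ∀ᵐ ω ∂ℙ,
      u ω (Set.projIcc 0 T hT.le 0) = v ω ∧
      ∀ t ∈ Set.Icc (0:ℝ) T,
        HasDerivWithinAt (fun s : ℝ => u ω (Set.projIcc 0 T hT.le s))
          (du ω (Set.projIcc 0 T hT.le t)) (Set.Icc (0:ℝ) T) t ∧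
        du ω (Set.projIcc 0 T hT.le t) =
          -(u ω (Set.projIcc 0 T hT.le t)) +
            HH (w ω) (Nem (f ω) (u ω (Set.projIcc 0 T hT.le t))) +
            g ω (Set.projIcc 0 T hT.le t)) :
    ∫⁻ ω, ((‖u ω‖₊ : ℝ≥0∞) + (‖du ω‖₊ : ℝ≥0∞)) ^ p ∂ℙ < ⊤ := by
  have : IsFiniteMeasure (volume.restrict D) := isFiniteMeasure_restrict.mpr hfin.ne
  obtain ⟨c, hc0, hforce⟩ : ∃ c : ℝ, 0 ≤ c ∧
      ∀ k φ z, ‖HH k (Nem φ z)‖ ≤ c * (‖k‖ * ‖φ.val.1‖) :=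
    ⟨_, by positivity, fun k φ z => norm_le_of_ae_eq_integral_kernel_comp (hNem φ z) (hHH k _)⟩
  set M : ℝ≥0 := ⟨(2 * Real.exp T + 1) * (1 + c), mul_nonneg (by positivity) (by linarith)⟩
  have hpath : ∀ᵐ ω ∂ℙ, (‖u ω‖₊ : ℝ≥0∞) + ‖du ω‖₊ ≤
      M * (‖v ω‖₊ + ‖w ω‖₊ * ‖(f ω).val.1‖₊ + ‖g ω‖₊) := by
    filter_upwards [husol] with ω ⟨hu0, hsol⟩
    have hC1 := ContinuousMap.norm_add_norm_deriv_le_of_eq_neg_add hT.le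
      (fun t => HH (w ω) (Nem (f ω) (u ω (projIcc 0 T hT.le t))) + g ω (projIcc 0 T hT.le t))
      (fun t _ => (norm_add_le _ _).trans (add_le_add (hforce _ _ _) ((g ω).norm_coe_le_norm _)))
      (fun t ht => (hsol t ht).1) (fun t ht => by rw [(hsol t ht).2, add_assoc])
    rw [hu0] at hC1
    have hreal : ‖u ω‖ + ‖du ω‖ ≤ M * (‖v ω‖ + ‖w ω‖ * ‖(f ω).val.1‖ + ‖g ω‖) := by
      rw [show (M : ℝ) = (2 * Real.exp T + 1) * (1 + c) from rfl, mul_assoc]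
      refine hC1.trans (mul_le_mul_of_nonneg_left ?_ (by positivity))
      nlinarith [norm_nonneg (v ω), norm_nonneg (g ω), hc0,
        mul_nonneg (norm_nonneg (w ω)) (norm_nonneg (f ω).val.1)]
    exact_mod_cast hreal
  -- `hindep` refers to Borel σ-algebras, which these types do not carry as instances.
  let := borel (Lp ℝ 2 ((volume.restrict D).prod (volume.restrict D)))
  have : BorelSpace (Lp ℝ 2 ((volume.restrict D).prod (volume.restrict D))) := ⟨rfl⟩
  let := borel BC1
  have : BorelSpace BC1 := ⟨rfl⟩
  have hval : Continuous fun φ : BC1 => φ.val.1 := continuous_fst.comp continuous_subtype_val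
  have hwf : ProbabilityTheory.IndepFun (fun ω => ‖w ω‖ₑ) (fun ω => ‖(f ω).val.1‖ₑ) ℙ :=
    (indepFun_of_measure_inter_preimage_eq_mul₄ hindep).comp measurable_enorm
      hval.enorm.measurable
  exact lintegral_rpow_lt_top_of_le_mul_add_mul_add hp M hpath hv.enorm hw.enorm
    (hval.comp_aestronglyMeasurable hf).enorm hwf hvp hwp hfp hgp

/-- `Lᵖ`-regularity for the nonlinear neural field with random data: if
the mutually independent strongly measurable data `w, f, g, v` are `p`-integrable and `u`
is a strongly measurable `C¹(J,L²(D))`-valued solution (encoded as the pair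
(value, derivative) `u, du`), then `∫ ‖u‖_{C¹}^p dℙ < ∞`. -/
theorem stmt15 (d : ℕ) (D : Set (EuclideanSpace ℝ (Fin d)))
    (hD : IsCompact D) (hpos : 0 < volume D) (hfin : volume D < ⊤)
    (T : ℝ) (hT : 0 < T)
    (Ω : Type*) [MeasurableSpace Ω] (ℙ : Measure Ω) [IsProbabilityMeasure ℙ]
    (p : ℝ) (hp : 1 ≤ p)
    (HH : Lp ℝ 2 ((volume.restrict D).prod (volume.restrict D)) →
      (Lp ℝ 2 (volume.restrict D) →L[ℝ] Lp ℝ 2 (volume.restrict D)))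
    (hHH : ∀ kk (z : Lp ℝ 2 (volume.restrict D)),
      (HH kk z : _ → ℝ) =ᵐ[volume.restrict D]
        fun x => ∫ x', kk (x, x') * z x' ∂(volume.restrict D))
    (Nem : BC1 → Lp ℝ 2 (volume.restrict D) → Lp ℝ 2 (volume.restrict D))
    (hNem : ∀ (φ : BC1) (z : Lp ℝ 2 (volume.restrict D)),
      (Nem φ z : _ → ℝ) =ᵐ[volume.restrict D] fun x => (φ.val.1 : ℝ → ℝ) (z x))
    -- strongly measurable, p-integrable random data
    (w : Ω → Lp ℝ 2 ((volume.restrict D).prod (volume.restrict D)))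
    (hw : AEStronglyMeasurable w ℙ)
    (hwp : ∫⁻ ω, (‖w ω‖₊ : ℝ≥0∞) ^ p ∂ℙ < ⊤)
    (f : Ω → BC1) (hf : AEStronglyMeasurable f ℙ)
    (hfp : ∫⁻ ω, (‖(f ω).val.1‖₊ : ℝ≥0∞) ^ p ∂ℙ < ⊤)
    (g : Ω → C(Set.Icc (0:ℝ) T, Lp ℝ 2 (volume.restrict D)))
    (hg : AEStronglyMeasurable g ℙ)
    (hgp : ∫⁻ ω, (‖g ω‖₊ : ℝ≥0∞) ^ p ∂ℙ < ⊤)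
    (v : Ω → Lp ℝ 2 (volume.restrict D)) (hv : AEStronglyMeasurable v ℙ)
    (hvp : ∫⁻ ω, (‖v ω‖₊ : ℝ≥0∞) ^ p ∂ℙ < ⊤)
    -- mutual independence of (w, f, g, v)
    (hindep : ∀ (Bw : Set (Lp ℝ 2 ((volume.restrict D).prod (volume.restrict D))))
      (Bf : Set BC1)
      (Bg : Set (C(Set.Icc (0:ℝ) T, Lp ℝ 2 (volume.restrict D))))
      (Bv : Set (Lp ℝ 2 (volume.restrict D))),
      MeasurableSet[borel _] Bw → MeasurableSet[borel _] Bf →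
      MeasurableSet[borel _] Bg → MeasurableSet[borel _] Bv →
      ℙ (w ⁻¹' Bw ∩ f ⁻¹' Bf ∩ g ⁻¹' Bg ∩ v ⁻¹' Bv) =
        ℙ (w ⁻¹' Bw) * ℙ (f ⁻¹' Bf) * ℙ (g ⁻¹' Bg) * ℙ (v ⁻¹' Bv))
    -- a strongly measurable C¹-valued solution (value u, derivative du)
    (u du : Ω → C(Set.Icc (0:ℝ) T, Lp ℝ 2 (volume.restrict D)))
    (humeas : AEStronglyMeasurable (fun ω => (u ω, du ω)) ℙ)
    (husol : ∀ᵐ ω ∂ℙ,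
      u ω (Set.projIcc 0 T hT.le 0) = v ω ∧
      ∀ t ∈ Set.Icc (0:ℝ) T,
        HasDerivWithinAt (fun s : ℝ => u ω (Set.projIcc 0 T hT.le s))
          (du ω (Set.projIcc 0 T hT.le t)) (Set.Icc (0:ℝ) T) t ∧
        du ω (Set.projIcc 0 T hT.le t) =
          -(u ω (Set.projIcc 0 T hT.le t)) +
            HH (w ω) (Nem (f ω) (u ω (Set.projIcc 0 T hT.le t))) +
            g ω (Set.projIcc 0 T hT.le t)) :
    ∫⁻ ω, ((‖u ω‖₊ : ℝ≥0∞) + (‖du ω‖₊ : ℝ≥0∞)) ^ p ∂ℙ < ⊤ :=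
  stmt15_general d D hfin T hT Ω ℙ p hp HH hHH Nem hNem w hw hwp f hf hfp g hgp v hv hvp hindep u du
    husol
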